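/- arXiv:1207.0491 — 4 statements merged into one kernel-verified Lean document; each statement's English description precedes it below -/
import Mathlib

section
/- Let V be the space of symmetric n×n real matrices, and for a positive definite g = (g_{ij}) ∈ V define the DeWitt metric on T_g V ≅ V by G(h,k) = (1/2)(g^{ik}g^{jl} + g^{il}g^{jk})h_{ij}k_{kl} - g^{ij}g^{kl}h_{ij}k_{kl} (indices raised with the inverse g^{ij}). Then for n ≥ 2 the DeWitt metric is a nondegenerate bilinear form of Lorentzian signature (1, n(n+1)/2 - 1): it is negative definite on the one-dimensional subspace spanned by g itself, and positive definite on the trace-free complement {h : g^{ij}h_{ij} = 0}. -/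
/-!
On the line through `g` one has `G(g, g) = tr 1 - (tr 1)² = n - n² < 0`, and `G(g, h) = (1 - n) tr(g⁻¹h)`,
so the trace-free matrices are exactly the `G`-orthogonal complement of `g`. On that complement the
trace term vanishes and `G(h, h) = tr(g⁻¹hg⁻¹h) = tr(m²)` with `m = r h r` symmetric, where `r` is the
square root of `g⁻¹`; this is the sum of squares of the entries of `m`, hence positive for `h ≠ 0`.
Nondegeneracy follows: a `G`-null vector is orthogonal to `g`, hence trace-free, hence zero.
-/

/-- The DeWitt metric at a positive definite symmetric matrix `g`, evaluated on
symmetric matrices `h`, `k`: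
`G(h,k) = (1/2)(g^{ik}g^{jl}+g^{il}g^{jk})h_{ij}k_{kl} - g^{ij}g^{kl}h_{ij}k_{kl}`
`       = tr(g⁻¹ h g⁻¹ k) - tr(g⁻¹ h) tr(g⁻¹ k)` (for symmetric `h`, `k`). -/
noncomputable def DeWitt {n : ℕ} (g h k : Matrix (Fin n) (Fin n) ℝ) : ℝ :=
  Matrix.trace (g⁻¹ * h * g⁻¹ * k) - Matrix.trace (g⁻¹ * h) * Matrix.trace (g⁻¹ * k)

open Matrix

namespace Matrix

variable {ι : Type*} [Fintype ι]

theorem trace_mul_self_pos_of_isSymm {m : Matrix ι ι ℝ} (hm : m.IsSymm) (h0 : m ≠ 0) :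
    0 < (m * m).trace := by
  have hmm : m * m = m * mᴴ := by rw [conjTranspose_eq_transpose_of_trivial, hm.eq]
  rw [hmm]
  exact (posSemidef_self_mul_conjTranspose m).trace_nonneg.lt_of_ne'
    (trace_mul_conjTranspose_self_eq_zero_iff.not.mpr h0)

open scoped MatrixOrder in
theorem trace_mul_mul_mul_pos_of_posDef [DecidableEq ι] {P h : Matrix ι ι ℝ} (hP : P.PosDef) (hh : h.IsSymm)
    (h0 : h ≠ 0) : 0 < (P * h * P * h).trace := by
  set r := CFC.sqrt P
  have hrr : r * r = P := CFC.sqrt_mul_sqrt_self P hP.posSemidef.nonneg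
  have hr : r.IsSymm := isHermitian_iff_isSymm.mp (CFC.sqrt_nonneg P).posSemidef.1
  have hr_unit : IsUnit r := isUnit_of_mul_isUnit_left (hrr ▸ hP.isUnit)
  have hm : (r * h * r).IsSymm := by
    simp only [IsSymm, transpose_mul, hr.eq, hh.eq, Matrix.mul_assoc]
  have hm0 : r * h * r ≠ 0 := by
    rwa [ne_eq, hr_unit.mul_left_eq_zero, hr_unit.mul_right_eq_zero]
  have htrace : (P * h * P * h).trace = (r * h * r * (r * h * r)).trace := by
    rw [← hrr, show r * r * h * (r * r) * h = r * (r * h * r * r * h) by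
      simp only [Matrix.mul_assoc], trace_mul_comm]
    simp only [Matrix.mul_assoc]
  exact htrace ▸ trace_mul_self_pos_of_isSymm hm hm0

end Matrix

section DeWitt

variable {n : ℕ} {g : Matrix (Fin n) (Fin n) ℝ}

theorem deWitt_comm (g h k : Matrix (Fin n) (Fin n) ℝ) : DeWitt g h k = DeWitt g k h := by
  simp only [DeWitt, Matrix.mul_assoc]
  rw [← Matrix.mul_assoc g⁻¹ h, ← Matrix.mul_assoc g⁻¹ k, trace_mul_comm, mul_comm]

theorem deWitt_smul_smul (g h k : Matrix (Fin n) (Fin n) ℝ) (a b : ℝ) :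
    DeWitt g (a • h) (b • k) = a * b * DeWitt g h k := by
  simp only [DeWitt, Matrix.mul_smul, Matrix.smul_mul, trace_smul, smul_eq_mul]
  ring

theorem deWitt_self_left (hg : IsUnit g.det) (h : Matrix (Fin n) (Fin n) ℝ) :
    DeWitt g g h = (1 - n) * (g⁻¹ * h).trace := by
  rw [DeWitt, Matrix.mul_assoc g⁻¹ g, mul_nonsing_inv g hg, Matrix.mul_one, nonsing_inv_mul g hg,
    trace_one, Fintype.card_fin]
  ring

theorem deWitt_self_self (hg : IsUnit g.det) : DeWitt g g g = (1 - n) * n := by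
  rw [deWitt_self_left hg, nonsing_inv_mul g hg, trace_one, Fintype.card_fin]

theorem deWitt_self_pos_of_trace_eq_zero (hg : g.PosDef) {h : Matrix (Fin n) (Fin n) ℝ}
    (hh : h.IsSymm) (h0 : h ≠ 0) (htr : (g⁻¹ * h).trace = 0) : 0 < DeWitt g h h := by
  rw [DeWitt, htr, zero_mul, sub_zero]
  exact trace_mul_mul_mul_pos_of_posDef hg.inv hh h0

end DeWitt

/-- For `n ≥ 2` the DeWitt metric on the space of symmetric matrices at a
positive definite `g` is a nondegenerate bilinear form of Lorentzian signature
`(1, n(n+1)/2 - 1)`: it is negative definite on the line spanned by `g` and positive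
definite on the `G`-orthogonal, trace-free complement `{h : g^{ij}h_{ij} = 0}`. -/
theorem deWitt_lorentzian_signature
    (n : ℕ) (hn : 2 ≤ n) (g : Matrix (Fin n) (Fin n) ℝ)
    (hg : g.PosDef) (hgsym : g.IsSymm) :
    (∀ c : ℝ, c ≠ 0 → DeWitt g (c • g) (c • g) < 0) ∧
    (∀ h : Matrix (Fin n) (Fin n) ℝ, h.IsSymm → h ≠ 0 →
      Matrix.trace (g⁻¹ * h) = 0 → 0 < DeWitt g h h) ∧
    (∀ h : Matrix (Fin n) (Fin n) ℝ, h.IsSymm →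
      Matrix.trace (g⁻¹ * h) = 0 → DeWitt g g h = 0) ∧
    (∀ h : Matrix (Fin n) (Fin n) ℝ, h.IsSymm →
      (∀ k : Matrix (Fin n) (Fin n) ℝ, k.IsSymm → DeWitt g h k = 0) → h = 0) := by
  have hdet : IsUnit g.det := (isUnit_iff_isUnit_det g).mp hg.isUnit
  have hn' : (1 - n : ℝ) < 0 := by
    have : (2 : ℝ) ≤ n := by exact_mod_cast hn
    linarith
  refine ⟨fun c hc => ?_, fun h hh h0 htr => deWitt_self_pos_of_trace_eq_zero hg hh h0 htr,
    fun h _ htr => by rw [deWitt_self_left hdet, htr, mul_zero], fun h hh hnull => ?_⟩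
  · rw [deWitt_smul_smul, deWitt_self_self hdet]
    exact mul_neg_of_pos_of_neg (mul_self_pos.mpr hc)
      (mul_neg_of_neg_of_pos hn' (by exact_mod_cast (by omega : 0 < n)))
  · have htr : (g⁻¹ * h).trace = 0 := by
      have hgh := hnull g hgsym
      rw [deWitt_comm, deWitt_self_left hdet] at hgh
      exact (mul_eq_zero.mp hgh).resolve_left hn'.ne
    by_contra h0
    exact (deWitt_self_pos_of_trace_eq_zero hg hh h0 htr).ne' (hnull h hh)
end

section
/- Let F be the cone of positive definite symmetric n×n matrices (n ≥ 2) with the DeWitt metric. Then τ(g) = log φ(g) = (1/2) log(det g/det χ) is a smooth time function on F: its gradient with respect to the DeWitt metric is timelike (has negative DeWitt norm squared) at every point. -/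
attribute [local instance] Matrix.normedAddCommGroup Matrix.normedSpace

/-- On the cone of positive definite symmetric `n×n` matrices (`n ≥ 2`)
with the DeWitt metric, `τ(g) = log φ(g) = (1/2) log(det g / det χ)` is a smooth time
function: it is smooth on the cone, and at every point its gradient with respect to the
DeWitt metric (the vector `v` with `G(v,h) = dτ(h) = (1/2) tr(g⁻¹ h)` for all symmetric
`h`) is timelike, i.e. has negative DeWitt norm squared. -/
theorem tau_is_time_function
    (n : ℕ) (hn : 2 ≤ n) (χ : Matrix (Fin n) (Fin n) ℝ) (hχ : χ.PosDef) :
    ContDiffOn ℝ (⊤ : ℕ∞) (fun g : Matrix (Fin n) (Fin n) ℝ =>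
      (1 / 2 : ℝ) * Real.log (g.det / χ.det)) {g | g.PosDef} ∧
    ∀ g : Matrix (Fin n) (Fin n) ℝ, g.PosDef → g.IsSymm →
      ∃ v : Matrix (Fin n) (Fin n) ℝ, v.IsSymm ∧
        (∀ h : Matrix (Fin n) (Fin n) ℝ, h.IsSymm →
          DeWitt g v h = (1 / 2 : ℝ) * Matrix.trace (g⁻¹ * h)) ∧
        DeWitt g v v < 0 := by
  constructor
  · have hdet : ContDiff ℝ (⊤ : ℕ∞) (fun g : Matrix (Fin n) (Fin n) ℝ => g.det) := by
      simp only [Matrix.det_apply']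
      exact ContDiff.sum fun σ _ => ContDiff.mul contDiff_const
        (contDiff_prod fun i _ => contDiff_apply_apply ℝ ℝ (σ i) i)
    apply ContDiffOn.mul contDiffOn_const
    apply ContDiffOn.log
    · exact (hdet.contDiffOn).div contDiffOn_const (fun _ _ => ne_of_gt hχ.det_pos)
    · intro g hg
      exact div_ne_zero (ne_of_gt hg.det_pos) (ne_of_gt hχ.det_pos)
  · intro g hg hgs
    set c : ℝ := -1 / (2 * (n - 1)) with hc
    have hdetu : IsUnit g.det := isUnit_iff_ne_zero.mpr hg.det_pos.ne'
    have hinv : g⁻¹ * g = 1 := Matrix.nonsing_inv_mul g hdetu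
    have h1 : g⁻¹ * (c • g) = c • (1 : Matrix (Fin n) (Fin n) ℝ) := by
      rw [Matrix.mul_smul, hinv]
    have hn1 : (n : ℝ) - 1 ≠ 0 := by
      have : (2 : ℝ) ≤ (n : ℝ) := by exact_mod_cast hn
      linarith
    have hprop : ∀ h : Matrix (Fin n) (Fin n) ℝ,
        DeWitt g (c • g) h = (1 / 2 : ℝ) * Matrix.trace (g⁻¹ * h) := by
      intro h
      unfold DeWitt
      rw [h1]
      rw [Matrix.smul_mul, Matrix.smul_mul, Matrix.one_mul, Matrix.trace_smul,
        Matrix.trace_smul, Matrix.trace_one]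
      simp only [smul_eq_mul]
      field_simp [hc]
      rw [Fintype.card_fin, hc]
      field_simp
      ring
    refine ⟨c • g, hgs.smul c, fun h _ => hprop h, ?_⟩
    rw [hprop (c • g), h1, Matrix.trace_smul, Matrix.trace_one]
    have hcneg : c < 0 := by
      rw [hc]
      apply div_neg_of_neg_of_pos (by norm_num)
      have : (2 : ℝ) ≤ (n : ℝ) := by exact_mod_cast hn
      linarith
    have hnpos : (0 : ℝ) < (Fintype.card (Fin n) : ℝ) := by
      simp [Fintype.card_fin]; omega
    simp only [smul_eq_mul]
    nlinarith
end

section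
/- Let (M, σ) be a connected Riemannian manifold and c > 0 a constant. On ℝ × M consider the Lorentzian metric ds² = c(-dτ² + σ). If (M, σ) is a complete Riemannian manifold, then every slice {τ = const} × M is a Cauchy hypersurface, and in particular ℝ × M is globally hyperbolic. -/
/-- A future-directed timelike curve in the Lorentzian product `(ℝ × M, c(-dτ² + σ))`,
parametrized by the time coordinate `τ` over the parameter set `I` (so the curve is
`s ↦ (s, γ s)`): timelike means `c·dist(γ s, γ t)² < c·(t-s)²` for `s < t` in `I`. -/
def TimelikeOn {M : Type*} [MetricSpace M] (c : ℝ) (γ : ℝ → M) (I : Set ℝ) : Prop :=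
  ∀ s ∈ I, ∀ t ∈ I, s < t → c * (dist (γ s) (γ t)) ^ 2 < c * (t - s) ^ 2

/-- The curve `s ↦ (s, γ s)`, `s ∈ I`, is inextendible: it admits no extension to a
timelike curve over a strictly larger open interval. -/
def InextendibleTimelike {M : Type*} [MetricSpace M] (c : ℝ) (γ : ℝ → M) (I : Set ℝ) : Prop :=
  TimelikeOn c γ I ∧
    ∀ (J : Set ℝ) (γ' : ℝ → M), IsOpen J → J.OrdConnected → I ⊆ J →
      (∀ s ∈ I, γ' s = γ s) → TimelikeOn c γ' J → J = I

lemma tl_dist_lt {M : Type*} [MetricSpace M] {c : ℝ} (hc : 0 < c) {γ : ℝ → M} {I : Set ℝ}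
    (h : TimelikeOn c γ I) {s t : ℝ} (hs : s ∈ I) (ht : t ∈ I) (hst : s < t) :
    dist (γ s) (γ t) < t - s := by
  have h1 := h s hs t ht hst
  have h2 : dist (γ s) (γ t) ^ 2 < (t - s) ^ 2 := lt_of_mul_lt_mul_left h1 hc.le
  exact lt_of_pow_lt_pow_left₀ 2 (by linarith) h2

lemma tl_dist_le {M : Type*} [MetricSpace M] {c : ℝ} (hc : 0 < c) {γ : ℝ → M} {I : Set ℝ}
    (h : TimelikeOn c γ I) {s t : ℝ} (hs : s ∈ I) (ht : t ∈ I) :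
    dist (γ s) (γ t) ≤ |t - s| := by
  rcases lt_trichotomy s t with h1 | h1 | h1
  · exact (tl_dist_lt hc h hs ht h1).le.trans (le_abs_self _)
  · simp [h1]
  · rw [dist_comm, abs_sub_comm]
    exact (tl_dist_lt hc h ht hs h1).le.trans (le_abs_self _)

lemma tl_sq {c : ℝ} (hc : 0 < c) {d e : ℝ} (hd : 0 ≤ d) (h : d < e) :
    c * d ^ 2 < c * e ^ 2 :=
  mul_lt_mul_of_pos_left (pow_lt_pow_left₀ h hd two_ne_zero) hc

lemma not_bddAbove_of_inext {M : Type*} [MetricSpace M] [CompleteSpace M]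
    {c : ℝ} (hc : 0 < c)
    {γ : ℝ → M} {I : Set ℝ} (hI : IsOpen I) (hI' : I.OrdConnected) (hne : I.Nonempty)
    (hγ : InextendibleTimelike c γ I) : ¬ BddAbove I := by
  intro hbdd
  set b := sSup I with hb
  have hle : ∀ s ∈ I, s ≤ b := fun s hs => le_csSup hbdd hs
  have hbnotmem : b ∉ I := by
    intro hbI
    obtain ⟨ε, hε, hball⟩ := Metric.isOpen_iff.1 hI b hbI
    have : b + ε / 2 ∈ I := hball (by simp [Real.dist_eq, abs_of_pos, hε, half_lt_self hε,
      abs_of_nonneg (le_of_lt (half_pos hε))])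
    linarith [hle _ this]
  have hlt : ∀ s ∈ I, s < b := fun s hs => lt_of_le_of_ne (hle s hs) (fun h => hbnotmem (h ▸ hs))
  -- choose a sequence in I tending to b
  have hex : ∀ n : ℕ, ∃ x ∈ I, b - 1 / (n + 1) < x := by
    intro n
    have hlt' : b - 1 / (n + 1) < b := by
      have : (0:ℝ) < 1 / (n+1) := by positivity
      linarith
    exact exists_lt_of_lt_csSup hne hlt'
  choose u hu hub using hex
  have hult : ∀ n, u n < b := fun n => hlt _ (hu n)
  have hcau : CauchySeq (fun n => γ (u n)) := by
    refine cauchySeq_of_le_tendsto_0 (fun N => 1 / (N + 1)) ?_ ?_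
    · intro n m N hn hm
      have h1 : b - 1 / (N + 1) < u n := by
        have : (1:ℝ) / (n + 1) ≤ 1 / (N + 1) := by
          apply one_div_le_one_div_of_le (by positivity); exact_mod_cast by omega
        linarith [hub n]
      have h2 : b - 1 / (N + 1) < u m := by
        have : (1:ℝ) / (m + 1) ≤ 1 / (N + 1) := by
          apply one_div_le_one_div_of_le (by positivity); exact_mod_cast by omega
        linarith [hub m]
      calc dist (γ (u n)) (γ (u m)) ≤ |u m - u n| := tl_dist_le hc hγ.1 (hu n) (hu m)
        _ ≤ 1 / (N + 1) := by
            rw [abs_sub_le_iff]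
            constructor <;> nlinarith [hult n, hult m]
    · exact tendsto_one_div_add_atTop_nhds_zero_nat
  obtain ⟨L, hL⟩ := cauchySeq_tendsto_of_complete hcau
  have hutend : Filter.Tendsto u Filter.atTop (nhds b) := by
    apply tendsto_of_tendsto_of_tendsto_of_le_of_le (g := fun n : ℕ => b - 1 / (n + 1))
      (h := fun _ => b)
    · simpa using (tendsto_one_div_add_atTop_nhds_zero_nat.const_sub b)
    · exact tendsto_const_nhds
    · exact fun n => (hub n).le
    · exact fun n => (hult n).le
  have hdistL : ∀ s ∈ I, dist (γ s) L ≤ b - s := by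
    intro s hs
    have h1 : Filter.Tendsto (fun n => dist (γ s) (γ (u n))) Filter.atTop (nhds (dist (γ s) L)) :=
      ((continuous_const.dist continuous_id).continuousAt.tendsto.comp hL :)
    refine le_of_tendsto h1 ?_
    filter_upwards [hutend.eventually (eventually_gt_nhds (hlt s hs))] with n hn
    have := tl_dist_lt hc hγ.1 hs (hu n) hn
    linarith [hult n]
  -- strict bound via intermediate point
  have hdistL' : ∀ s ∈ I, dist (γ s) L < b - s := by
    intro s hs
    obtain ⟨v, hv, hsv⟩ := exists_lt_of_lt_csSup hne (hlt s hs)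
    calc dist (γ s) L ≤ dist (γ s) (γ v) + dist (γ v) L := dist_triangle _ _ _
      _ < (v - s) + (b - v) := by
          have h1 := tl_dist_lt hc hγ.1 hs hv hsv
          have h2 := hdistL v hv
          linarith
      _ = b - s := by ring
  -- the extension
  set J : Set ℝ := I ∪ Set.Ici b with hJ
  have hIJ : I ⊆ J := Set.subset_union_left
  have hIoi : ∀ s ∈ I, Set.Ioi s ⊆ J := by
    intro s hs y hy
    rcases le_or_gt b y with h | h
    · exact Or.inr h
    · obtain ⟨v, hv, hyv⟩ := exists_lt_of_lt_csSup hne h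
      exact Or.inl (hI'.out hs hv ⟨le_of_lt hy, hyv.le⟩)
  have hJopen : IsOpen J := by
    rw [isOpen_iff_mem_nhds]
    rintro x (hx | hx)
    · exact Filter.mem_of_superset (hI.mem_nhds hx) hIJ
    · obtain ⟨s, hs⟩ := hne
      have : x ∈ Set.Ioi s := lt_of_lt_of_le (hlt s hs) hx
      exact Filter.mem_of_superset (isOpen_Ioi.mem_nhds this) (hIoi s hs)
  have hJoc : J.OrdConnected := by
    constructor
    rintro x hx y hy z hz
    rcases le_or_gt b z with h | h
    · exact Or.inr h
    · have hxI : x ∈ I := by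
        rcases hx with hx | hx
        · exact hx
        · exact absurd (le_trans hx hz.1) (not_le.mpr h)
      rcases eq_or_lt_of_le hz.1 with h1 | h1
      · exact Or.inl (h1 ▸ hxI)
      · obtain ⟨v, hv, hzv⟩ := exists_lt_of_lt_csSup hne h
        exact Or.inl (hI'.out hxI hv ⟨hz.1, hzv.le⟩)
  classical
  set γ' : ℝ → M := fun x => if x ∈ I then γ x else L with hγ'
  have hagree : ∀ s ∈ I, γ' s = γ s := fun s hs => by simp only [hγ', if_pos hs]
  have htl : TimelikeOn c γ' J := by
    intro s hs t ht hst
    by_cases hsI : s ∈ I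
    · by_cases htI : t ∈ I
      · rw [hagree s hsI, hagree t htI]; exact hγ.1 s hsI t htI hst
      · have hbt : b ≤ t := ht.resolve_left htI
        rw [hagree s hsI, hγ']
        simp only [htI, if_false]
        exact tl_sq hc dist_nonneg (lt_of_lt_of_le (hdistL' s hsI) (by linarith))
    · have hbs : b ≤ s := hs.resolve_left hsI
      have htI : t ∉ I := fun htI => absurd (lt_of_le_of_lt hbs hst) (not_lt.mpr (hle t htI))
      rw [hγ']
      simp only [hsI, htI, if_false, dist_self]
      exact tl_sq hc le_rfl (by linarith)
  have := hγ.2 J γ' hJopen hJoc hIJ hagree htl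
  exact hbnotmem (this ▸ (Or.inr Set.self_mem_Ici : b ∈ J))

lemma tl_neg {M : Type*} [MetricSpace M] {c : ℝ} {γ : ℝ → M} {I : Set ℝ}
    (h : TimelikeOn c γ I) : TimelikeOn c (fun x => γ (-x)) ((fun x : ℝ => -x) ⁻¹' I) := by
  intro s hs t ht hst
  have := h (-t) ht (-s) hs (by linarith)
  calc c * dist (γ (-s)) (γ (-t)) ^ 2 = c * dist (γ (-t)) (γ (-s)) ^ 2 := by rw [dist_comm]
    _ < c * (-s - -t) ^ 2 := this
    _ = c * (t - s) ^ 2 := by ring_nf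

lemma oc_neg {J : Set ℝ} (h : J.OrdConnected) : ((fun x : ℝ => -x) ⁻¹' J).OrdConnected := by
  constructor
  intro x hx y hy z hz
  exact h.out hy hx ⟨by simpa using neg_le_neg hz.2, by simpa using neg_le_neg hz.1⟩

lemma inext_neg {M : Type*} [MetricSpace M] {c : ℝ} {γ : ℝ → M} {I : Set ℝ}
    (h : InextendibleTimelike c γ I) :
    InextendibleTimelike c (fun x => γ (-x)) ((fun x : ℝ => -x) ⁻¹' I) := by
  refine ⟨tl_neg h.1, ?_⟩
  intro J γ' hJ hJoc hIJ hag htl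
  have hneg : ∀ S : Set ℝ, (fun x : ℝ => -x) ⁻¹' ((fun x : ℝ => -x) ⁻¹' S) = S := by
    intro S; ext x; simp
  have key := h.2 ((fun x : ℝ => -x) ⁻¹' J) (fun x => γ' (-x))
    (hJ.preimage continuous_neg) (oc_neg hJoc)
    (by intro x hx; exact hIJ (by simpa using hx))
    (by intro s hs; simpa using hag (-s) (by simpa using hs))
    (by simpa using tl_neg htl)
  have := congrArg (fun S => (fun x : ℝ => -x) ⁻¹' S) key
  simpa [hneg] using this

/-- Let `(M,σ)` be a connected complete Riemannian manifold (modelled as a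
complete metric space) and `c > 0`.  In `ℝ × M` with the Lorentzian metric
`ds² = c(-dτ² + σ)`, every slice `{τ = τ₀} × M` is a Cauchy hypersurface: every
inextendible future-directed timelike curve (parametrized by `τ` over an open interval `I`)
meets it exactly once.  In particular `ℝ × M` is globally hyperbolic. -/
theorem slices_are_cauchy_hypersurfaces
    {M : Type*} [MetricSpace M] [CompleteSpace M] [ConnectedSpace M]
    (c : ℝ) (hc : 0 < c)
    (γ : ℝ → M) (I : Set ℝ) (hI : IsOpen I) (hI' : I.OrdConnected) (hne : I.Nonempty)
    (hγ : InextendibleTimelike c γ I) :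
    ∀ τ₀ : ℝ, ∃! s : ℝ, s ∈ I ∧ s = τ₀ := by
  intro τ₀
  have hub : ¬ BddAbove I := not_bddAbove_of_inext hc hI hI' hne hγ
  have hlb : ¬ BddAbove ((fun x : ℝ => -x) ⁻¹' I) :=
    not_bddAbove_of_inext hc (hI.preimage continuous_neg) (oc_neg hI')
      (by obtain ⟨x, hx⟩ := hne; exact ⟨-x, by simpa using hx⟩) (inext_neg hγ)
  obtain ⟨x, hx, hτx⟩ := not_bddAbove_iff.1 hub τ₀
  obtain ⟨y, hy, hτy⟩ := not_bddAbove_iff.1 hlb (-τ₀)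
  have hyI : -y ∈ I := hy
  have hττ : τ₀ ∈ I := hI'.out hyI hx ⟨by linarith, hτx.le⟩
  exact ⟨τ₀, ⟨hττ, rfl⟩, fun s hs => hs.2⟩
end

section
/- Let g(s), s ∈ I, be a C¹ curve of positive definite symmetric n×n matrices satisfying g^{ij}(s) ġ_{ij}(s) = 0 (i.e., det g is constant) and ∫_I (g^{ik}g^{jl} ġ_{ij} ġ_{kl})^{1/2} ds ≤ C < ∞. Then all the metrics g(s) are uniformly equivalent: there exists a constant Λ = Λ(C, g(s₀)) such that Λ⁻¹ g(s₀) ≤ g(s) ≤ Λ g(s₀) as quadratic forms for all s ∈ I. -/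
/-!
Fix `v ≠ 0` and put `q(t) = vᵀ g(t) v > 0`. Writing `g = S²` with `S` symmetric,
`q'/q = wᵀ (S⁻¹ ġ S⁻¹) w / wᵀ w` for `w = S v`, so by Cauchy–Schwarz
`|q'/q| ≤ ‖S⁻¹ ġ S⁻¹‖_F = tr (g⁻¹ ġ g⁻¹ ġ) ^ (1/2)`, the speed of the curve.
Hence `|log q(s) - log q(s₀)| ≤ C`, i.e. `Λ = exp C` works.
-/

attribute [local instance] Matrix.normedAddCommGroup Matrix.normedSpace

open Matrix MeasureTheory Set Real Filter Topology

namespace Matrix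

variable {ι : Type*} [Fintype ι]

lemma mulVec_dotProduct_mulVec_le_trace_transpose_mul (M : Matrix ι ι ℝ) (w : ι → ℝ) :
    M *ᵥ w ⬝ᵥ M *ᵥ w ≤ trace (Mᵀ * M) * (w ⬝ᵥ w) := by
  have hrow : ∀ i, (M *ᵥ w) i ^ 2 ≤ (∑ j, M i j ^ 2) * (w ⬝ᵥ w) := fun i => by
    simpa only [mulVec, dotProduct, sq] using
      Finset.sum_mul_sq_le_sq_mul_sq Finset.univ (fun j => M i j) w
  calc M *ᵥ w ⬝ᵥ M *ᵥ w = ∑ i, (M *ᵥ w) i ^ 2 := by simp only [dotProduct, sq]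
    _ ≤ ∑ i, (∑ j, M i j ^ 2) * (w ⬝ᵥ w) := Finset.sum_le_sum fun i _ => hrow i
    _ = trace (Mᵀ * M) * (w ⬝ᵥ w) := by
      rw [← Finset.sum_mul, Finset.sum_comm]
      simp [trace, mul_apply, sq]

lemma abs_dotProduct_mulVec_le_sqrt_trace_transpose_mul (M : Matrix ι ι ℝ) (w : ι → ℝ) :
    |w ⬝ᵥ M *ᵥ w| ≤ √(trace (Mᵀ * M)) * (w ⬝ᵥ w) := by
  have hw : 0 ≤ w ⬝ᵥ w := Finset.sum_nonneg fun i _ => mul_self_nonneg (w i)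
  have hsq : (w ⬝ᵥ M *ᵥ w) ^ 2 ≤ trace (Mᵀ * M) * (w ⬝ᵥ w) ^ 2 :=
    calc (w ⬝ᵥ M *ᵥ w) ^ 2 ≤ (w ⬝ᵥ w) * (M *ᵥ w ⬝ᵥ M *ᵥ w) := by
          simpa only [dotProduct, sq] using Finset.sum_mul_sq_le_sq_mul_sq Finset.univ w (M *ᵥ w)
      _ ≤ (w ⬝ᵥ w) * (trace (Mᵀ * M) * (w ⬝ᵥ w)) :=
          mul_le_mul_of_nonneg_left (mulVec_dotProduct_mulVec_le_trace_transpose_mul M w) hw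
      _ = trace (Mᵀ * M) * (w ⬝ᵥ w) ^ 2 := by ring
  calc |w ⬝ᵥ M *ᵥ w| ≤ √(trace (Mᵀ * M) * (w ⬝ᵥ w) ^ 2) := Real.abs_le_sqrt hsq
    _ = √(trace (Mᵀ * M)) * (w ⬝ᵥ w) := by rw [Real.sqrt_mul' _ (sq_nonneg _), Real.sqrt_sq hw]

lemma mulVec_dotProduct_mulVec_mulVec (S B : Matrix ι ι ℝ) (v : ι → ℝ) :
    S *ᵥ v ⬝ᵥ B *ᵥ (S *ᵥ v) = v ⬝ᵥ (Sᵀ * B * S) *ᵥ v := by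
  rw [← mulVec_mulVec, ← mulVec_mulVec, dotProduct_mulVec v, vecMul_transpose]

variable [DecidableEq ι]

open scoped MatrixOrder in
lemma PosDef.exists_isSymm_isUnit_mul_self_eq {g : Matrix ι ι ℝ} (hg : g.PosDef) :
    ∃ S : Matrix ι ι ℝ, S.IsSymm ∧ IsUnit S ∧ S * S = g := by
  have hSS : CFC.sqrt g * CFC.sqrt g = g := CFC.sqrt_mul_sqrt_self g hg.posSemidef.nonneg
  refine ⟨CFC.sqrt g, ?_, isUnit_of_mul_isUnit_left (hSS ▸ hg.isUnit), hSS⟩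
  show (CFC.sqrt g)ᵀ = CFC.sqrt g
  simpa only [IsHermitian, conjTranspose_eq_transpose_of_trivial] using
    (CFC.sqrt_nonneg g).posSemidef.isHermitian

lemma abs_dotProduct_mulVec_le_sqrt_trace_inv_mul_sq {g A : Matrix ι ι ℝ} (hg : g.PosDef)
    (hA : A.IsSymm) (v : ι → ℝ) :
    |v ⬝ᵥ A *ᵥ v| ≤ √(trace (g⁻¹ * A * (g⁻¹ * A))) * (v ⬝ᵥ g *ᵥ v) := by
  obtain ⟨S, hSsymm, hSunit, rfl⟩ := hg.exists_isSymm_isUnit_mul_self_eq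
  have hSdet : IsUnit S.det := (isUnit_iff_isUnit_det S).mp hSunit
  set M := S⁻¹ * A * S⁻¹ with hM
  have hMsymm : Mᵀ = M := by
    rw [hM, transpose_mul, transpose_mul, transpose_nonsing_inv, hSsymm.eq, hA.eq,
      Matrix.mul_assoc]
  have hquad : v ⬝ᵥ A *ᵥ v = S *ᵥ v ⬝ᵥ M *ᵥ (S *ᵥ v) := by
    rw [mulVec_dotProduct_mulVec_mulVec, hSsymm.eq, hM]
    congr 2
    simp only [← Matrix.mul_assoc, mul_nonsing_inv S hSdet, Matrix.one_mul]
    rw [Matrix.mul_assoc, nonsing_inv_mul S hSdet, Matrix.mul_one]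
  have hnorm : v ⬝ᵥ (S * S) *ᵥ v = S *ᵥ v ⬝ᵥ S *ᵥ v := by
    simpa only [Matrix.mul_one, one_mulVec, hSsymm.eq] using
      (mulVec_dotProduct_mulVec_mulVec S 1 v).symm
  have htrace : trace (Mᵀ * M) = trace ((S * S)⁻¹ * A * ((S * S)⁻¹ * A)) := by
    have hcycle : M * M = S⁻¹ * A * S⁻¹ * (S⁻¹ * A) * S⁻¹ := by simp only [hM, Matrix.mul_assoc]
    rw [hMsymm, hcycle, trace_mul_comm, Matrix.mul_inv_rev]
    simp only [Matrix.mul_assoc]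
  rw [hquad, hnorm, ← htrace]
  exact abs_dotProduct_mulVec_le_sqrt_trace_transpose_mul M (S *ᵥ v)

end Matrix

section Curves

variable {m n : Type*} [Fintype m] [Fintype n]

theorem HasDerivAt.matrix_transpose {g : ℝ → Matrix m n ℝ} {g' : Matrix m n ℝ} {t : ℝ}
    (h : HasDerivAt g g' t) : HasDerivAt (fun u => (g u)ᵀ) g'ᵀ t :=
  (LinearMap.toContinuousLinearMap
    (transposeLinearEquiv m n ℝ ℝ).toLinearMap).hasFDerivAt.comp_hasDerivAt t h

theorem HasDerivAt.dotProduct_mulVec {g : ℝ → Matrix m n ℝ} {g' : Matrix m n ℝ} {t : ℝ}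
    (h : HasDerivAt g g' t) (w : m → ℝ) (v : n → ℝ) :
    HasDerivAt (fun u => w ⬝ᵥ g u *ᵥ v) (w ⬝ᵥ g' *ᵥ v) t :=
  (LinearMap.toContinuousLinearMap
    { toFun := fun M : Matrix m n ℝ => w ⬝ᵥ M *ᵥ v
      map_add' := fun M N => by simp only [add_mulVec, dotProduct_add]
      map_smul' := fun c M => by simp only [smul_mulVec, dotProduct_smul, RingHom.id_apply] }
    ).hasFDerivAt.comp_hasDerivAt t h

theorem isSymm_deriv_of_eventually_isSymm {g : ℝ → Matrix n n ℝ} {t : ℝ}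
    (hg : DifferentiableAt ℝ g t) (hsym : ∀ᶠ u in 𝓝 t, (g u).IsSymm) : (deriv g t).IsSymm := by
  have heq : (fun u => (g u)ᵀ) =ᶠ[𝓝 t] g := hsym.mono fun u hu => hu.eq
  exact hg.hasDerivAt.matrix_transpose.deriv.symm.trans heq.deriv_eq

end Curves

theorem abs_log_sub_le_setIntegral {f f' h : ℝ → ℝ} {a b : ℝ}
    (hf : ∀ t ∈ uIcc a b, HasDerivAt f (f' t) t) (hf' : ContinuousOn f' (uIcc a b))
    (hpos : ∀ t ∈ uIcc a b, 0 < f t) (hh : IntegrableOn h (uIoc a b))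
    (hbound : ∀ t ∈ Ioo (min a b) (max a b), |f' t| ≤ h t * f t) :
    |log (f b) - log (f a)| ≤ ∫ t in uIoc a b, h t := by
  have hcont : ContinuousOn (fun t => f' t / f t) (uIcc a b) :=
    hf'.div (fun t ht => (hf t ht).continuousAt.continuousWithinAt) fun t ht => (hpos t ht).ne'
  have hftc : ∫ t in a..b, f' t / f t = log (f b) - log (f a) :=
    intervalIntegral.integral_eq_sub_of_hasDerivAt
      (fun t ht => (hf t ht).log (hpos t ht).ne') hcont.intervalIntegrable
  have hae : ∀ᵐ t ∂volume.restrict (uIoc a b), ‖f' t / f t‖ ≤ h t := by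
    rw [uIoc, ← Measure.restrict_congr_set Ioo_ae_eq_Ioc]
    refine ae_restrict_of_forall_mem measurableSet_Ioo fun t ht => ?_
    have hft : 0 < f t := hpos t (Ioo_subset_Icc_self ht)
    rw [Real.norm_eq_abs, abs_div, abs_of_pos hft, div_le_iff₀ hft]
    exact hbound t ht
  rw [← hftc, ← Real.norm_eq_abs, intervalIntegral.norm_integral_eq_norm_integral_uIoc]
  exact norm_integral_le_of_norm_le hh hae

theorem inv_exp_mul_le_and_le_exp_mul_of_abs_log_sub_le {x y C : ℝ} (hx : 0 < x) (hy : 0 < y)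
    (h : |log x - log y| ≤ C) : (exp C)⁻¹ * y ≤ x ∧ x ≤ exp C * y := by
  rw [← exp_neg, ← exp_log hx, ← exp_log hy, ← exp_add, ← exp_add, exp_le_exp, exp_le_exp]
  constructor <;> linarith [abs_le.mp h]

theorem bounded_length_metrics_uniformly_equivalent_general
    (n : ℕ) (I : Set ℝ) (hI : I.OrdConnected)
    (g : ℝ → Matrix (Fin n) (Fin n) ℝ) (hg : ContDiff ℝ 1 g)
    (hpos : ∀ s ∈ I, (g s).PosDef) (hsym : ∀ s ∈ I, (g s).IsSymm)
    (hint : MeasureTheory.IntegrableOn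
      (fun s => Real.sqrt (Matrix.trace ((g s)⁻¹ * deriv g s * ((g s)⁻¹ * deriv g s)))) I)
    (C : ℝ)
    (hC : (∫ s in I,
      Real.sqrt (Matrix.trace ((g s)⁻¹ * deriv g s * ((g s)⁻¹ * deriv g s)))) ≤ C)
    (s₀ : ℝ) (hs₀ : s₀ ∈ I) :
    ∃ Λ : ℝ, 0 < Λ ∧ ∀ s ∈ I, ∀ v : Fin n → ℝ,
      Λ⁻¹ * (v ⬝ᵥ (g s₀).mulVec v) ≤ v ⬝ᵥ (g s).mulVec v ∧
      v ⬝ᵥ (g s).mulVec v ≤ Λ * (v ⬝ᵥ (g s₀).mulVec v) := by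
  have hdiff : Differentiable ℝ g := hg.differentiable one_ne_zero
  have hderiv_symm : ∀ t ∈ interior I, (deriv g t).IsSymm := fun t ht =>
    isSymm_deriv_of_eventually_isSymm (hdiff t) <|
      eventually_of_mem (isOpen_interior.mem_nhds ht) fun u hu => hsym u (interior_subset hu)
  refine ⟨exp C, exp_pos C, fun s hs v => ?_⟩
  rcases eq_or_ne v 0 with rfl | hv
  · simp
  have hIcc : uIcc s₀ s ⊆ I := hI.uIcc_subset hs₀ hs
  have hIoc : uIoc s₀ s ⊆ I := hI.uIoc_subset hs₀ hs
  have hIoo : Ioo (min s₀ s) (max s₀ s) ⊆ interior I :=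
    interior_maximal (Ioo_subset_Icc_self.trans hIcc) isOpen_Ioo
  have hlength := (setIntegral_mono_set hint (ae_of_all _ fun t => sqrt_nonneg _)
    hIoc.eventuallyLE).trans hC
  have hlog : |log (v ⬝ᵥ g s *ᵥ v) - log (v ⬝ᵥ g s₀ *ᵥ v)| ≤ C :=
    (abs_log_sub_le_setIntegral (fun t _ => (hdiff t).hasDerivAt.dotProduct_mulVec v v)
      (continuous_const.dotProduct
        ((hg.continuous_deriv le_rfl).matrix_mulVec continuous_const)).continuousOn
      (fun t ht => (hpos t (hIcc ht)).dotProduct_mulVec_pos hv) (hint.mono_set hIoc)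
      fun t ht => abs_dotProduct_mulVec_le_sqrt_trace_inv_mul_sq
        (hpos t (interior_subset (hIoo ht))) (hderiv_symm t (hIoo ht)) v).trans hlength
  exact inv_exp_mul_le_and_le_exp_mul_of_abs_log_sub_le
    ((hpos s hs).dotProduct_mulVec_pos hv) ((hpos s₀ hs₀).dotProduct_mulVec_pos hv) hlog

/-- Let `g(s)`, `s ∈ I`, be a `C¹` curve of positive definite symmetric
`n×n` matrices with `g^{ij} ġ_{ij} = tr(g⁻¹ġ) = 0` and with bounded length
`∫_I (g^{ik}g^{jl} ġ_{ij} ġ_{kl})^{1/2} = ∫_I tr(g⁻¹ġ g⁻¹ġ)^{1/2} ≤ C` in the induced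
Riemannian metric.  Then all the metrics `g(s)` are uniformly equivalent: there is
`Λ = Λ(C, g(s₀)) > 0` with `Λ⁻¹ g(s₀) ≤ g(s) ≤ Λ g(s₀)` as quadratic forms. -/
theorem bounded_length_metrics_uniformly_equivalent
    (n : ℕ) (I : Set ℝ) (hI : I.OrdConnected) (hIm : MeasurableSet I)
    (g : ℝ → Matrix (Fin n) (Fin n) ℝ) (hg : ContDiff ℝ 1 g)
    (hpos : ∀ s ∈ I, (g s).PosDef) (hsym : ∀ s ∈ I, (g s).IsSymm)
    (htrfree : ∀ s ∈ I, Matrix.trace ((g s)⁻¹ * deriv g s) = 0)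
    (hint : MeasureTheory.IntegrableOn
      (fun s => Real.sqrt (Matrix.trace ((g s)⁻¹ * deriv g s * ((g s)⁻¹ * deriv g s)))) I)
    (C : ℝ)
    (hC : (∫ s in I,
      Real.sqrt (Matrix.trace ((g s)⁻¹ * deriv g s * ((g s)⁻¹ * deriv g s)))) ≤ C)
    (s₀ : ℝ) (hs₀ : s₀ ∈ I) :
    ∃ Λ : ℝ, 0 < Λ ∧ ∀ s ∈ I, ∀ v : Fin n → ℝ,
      Λ⁻¹ * (v ⬝ᵥ (g s₀).mulVec v) ≤ v ⬝ᵥ (g s).mulVec v ∧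
      v ⬝ᵥ (g s).mulVec v ≤ Λ * (v ⬝ᵥ (g s₀).mulVec v) :=
  bounded_length_metrics_uniformly_equivalent_general n I hI g hg hpos hsym hint C hC s₀ hs₀
end
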